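/- arXiv:2410.10523 — 4 statements merged into one kernel-verified Lean document; each statement's English description precedes it below -/
import Mathlib

section
/- Bayesian posterior stability under perturbation of the prior: suppose priors ρ and ρ′ are supported on a bounded open set D ⊂ ℝ^d, the likelihood satisfies sup_{u∈D} l(u) = K < ∞, and Z = ∫ l ρ > 0, Z′ = ∫ l ρ′ > 0. Then the posteriors π = lρ/Z and π′ = lρ′/Z′ satisfy D_H(π,π′) ≤ (2K/((√Z+√Z′)√Z′) + √K/√Z′)·D_H(ρ,ρ′). -/
open MeasureTheory

private lemma aux_cs {α : Type*} [MeasurableSpace α] {μ : Measure α} {u v : α → ℝ}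
    (hum : AEStronglyMeasurable u μ) (hvm : AEStronglyMeasurable v μ)
    (hu0 : ∀ x, 0 ≤ u x) (hv0 : ∀ x, 0 ≤ v x)
    (hu2 : Integrable (fun x => u x ^ 2) μ) (hv2 : Integrable (fun x => v x ^ 2) μ) :
    ∫ x, u x * v x ∂μ ≤ Real.sqrt (∫ x, u x ^ 2 ∂μ) * Real.sqrt (∫ x, v x ^ 2 ∂μ) := by
  have hpq : Real.HolderConjugate 2 2 := Real.HolderConjugate.two_two
  have h2 : (ENNReal.ofReal (2 : ℝ)) = 2 := by norm_num
  have hu : MemLp u (ENNReal.ofReal (2 : ℝ)) μ := by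
    rw [h2]; exact (memLp_two_iff_integrable_sq hum).2 hu2
  have hv : MemLp v (ENNReal.ofReal (2 : ℝ)) μ := by
    rw [h2]; exact (memLp_two_iff_integrable_sq hvm).2 hv2
  have h := integral_mul_le_Lp_mul_Lq_of_nonneg hpq (ae_of_all _ hu0) (ae_of_all _ hv0) hu hv
  have hpow : ∀ y : ℝ, y ^ (2 : ℝ) = y ^ 2 := fun y => by
    rw [show (2:ℝ) = ((2:ℕ):ℝ) by norm_num, Real.rpow_natCast]
  simp only [hpow] at h
  rw [← Real.sqrt_eq_rpow, ← Real.sqrt_eq_rpow] at h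
  exact h

private lemma aux_mink {α : Type*} [MeasurableSpace α] {μ : Measure α} {u v : α → ℝ}
    (hum : AEStronglyMeasurable u μ) (hvm : AEStronglyMeasurable v μ)
    (hu2 : Integrable (fun x => u x ^ 2) μ) (hv2 : Integrable (fun x => v x ^ 2) μ) :
    Real.sqrt (∫ x, (u x + v x) ^ 2 ∂μ) ≤
      Real.sqrt (∫ x, u x ^ 2 ∂μ) + Real.sqrt (∫ x, v x ^ 2 ∂μ) := by
  set A := ∫ x, u x ^ 2 ∂μ with hA
  set B := ∫ x, v x ^ 2 ∂μ with hB
  have hA0 : 0 ≤ A := integral_nonneg fun x => sq_nonneg _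
  have hB0 : 0 ≤ B := integral_nonneg fun x => sq_nonneg _
  have habsm : AEStronglyMeasurable (fun x => |u x| * |v x|) μ := by
    exact hum.norm.mul hvm.norm
  have habs : Integrable (fun x => |u x| * |v x|) μ := by
    refine Integrable.mono' ((hu2.add hv2).div_const 2) habsm (ae_of_all _ fun x => ?_)
    rw [Real.norm_eq_abs, abs_of_nonneg (mul_nonneg (abs_nonneg _) (abs_nonneg _))]
    show |u x| * |v x| ≤ (u x ^ 2 + v x ^ 2) / 2
    nlinarith [sq_nonneg (|u x| - |v x|), sq_abs (u x), sq_abs (v x)]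
  have h3 : ∫ x, |u x| * |v x| ∂μ ≤ Real.sqrt A * Real.sqrt B := by
    have h := aux_cs (by simpa [Real.norm_eq_abs] using hum.norm)
      (by simpa [Real.norm_eq_abs] using hvm.norm)
      (fun x => abs_nonneg _) (fun x => abs_nonneg _)
      (by simpa [sq_abs] using hu2) (by simpa [sq_abs] using hv2)
    simpa [sq_abs] using h
  have key : ∫ x, (u x + v x) ^ 2 ∂μ ≤ (Real.sqrt A + Real.sqrt B) ^ 2 := by
    have h1 : ∫ x, (u x + v x) ^ 2 ∂μ ≤
        ∫ x, (u x ^ 2 + 2 * (|u x| * |v x|) + v x ^ 2) ∂μ := by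
      refine integral_mono_of_nonneg (ae_of_all _ fun x => sq_nonneg _)
        ((hu2.add (habs.const_mul 2)).add hv2) (ae_of_all _ fun x => ?_)
      have h := le_abs_self (u x * v x)
      rw [abs_mul] at h
      show (u x + v x) ^ 2 ≤ u x ^ 2 + 2 * (|u x| * |v x|) + v x ^ 2
      nlinarith
    have h2 : ∫ x, (u x ^ 2 + 2 * (|u x| * |v x|) + v x ^ 2) ∂μ =
        A + 2 * (∫ x, |u x| * |v x| ∂μ) + B := by
      rw [integral_add
          (show Integrable (fun x => u x ^ 2 + 2 * (|u x| * |v x|)) μ from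
            hu2.add (habs.const_mul 2)) hv2,
        integral_add hu2 (habs.const_mul 2), integral_const_mul]
    have hsA : Real.sqrt A ^ 2 = A := Real.sq_sqrt hA0
    have hsB : Real.sqrt B ^ 2 = B := Real.sq_sqrt hB0
    nlinarith
  calc Real.sqrt (∫ x, (u x + v x) ^ 2 ∂μ)
      ≤ Real.sqrt ((Real.sqrt A + Real.sqrt B) ^ 2) := Real.sqrt_le_sqrt key
    _ = Real.sqrt A + Real.sqrt B := Real.sqrt_sq (by positivity)

/-- Bayesian posterior stability under perturbation of the prior: if priors ρ, ρ′
are supported on a bounded open set D, the likelihood l satisfies `l ≤ K` on D,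
and the normalizing constants `Z = ∫ lρ`, `Z′ = ∫ lρ′` are positive, then the
posteriors `π = lρ/Z`, `π′ = lρ′/Z′` satisfy
`D_H(π,π′) ≤ (2K/((√Z+√Z′)√Z′) + √K/√Z′)·D_H(ρ,ρ′)`. -/
theorem posterior_prior_hellinger_stability {d : ℕ}
    (D : Set (Fin d → ℝ)) (hD : IsOpen D) (hDb : Bornology.IsBounded D)
    (ρ ρ' l : (Fin d → ℝ) → ℝ) (K Z Z' : ℝ)
    (hρm : Measurable ρ) (hρ'm : Measurable ρ') (hlm : Measurable l)
    (hρ0 : ∀ x, 0 ≤ ρ x) (hρ'0 : ∀ x, 0 ≤ ρ' x) (hl0 : ∀ x, 0 ≤ l x)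
    (hρD : ∀ x ∉ D, ρ x = 0) (hρ'D : ∀ x ∉ D, ρ' x = 0)
    (hρi : Integrable ρ) (hρ'i : Integrable ρ')
    (hρ1 : (∫ x, ρ x) = 1) (hρ'1 : (∫ x, ρ' x) = 1)
    (hK : ∀ u ∈ D, l u ≤ K)
    (hlρ : Integrable (fun x => l x * ρ x))
    (hlρ' : Integrable (fun x => l x * ρ' x))
    (hZdef : Z = ∫ x, l x * ρ x) (hZ'def : Z' = ∫ x, l x * ρ' x)
    (hZ : 0 < Z) (hZ' : 0 < Z') :
    Real.sqrt ((1 / 2) * ∫ x,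
        (Real.sqrt (l x * ρ x / Z) - Real.sqrt (l x * ρ' x / Z')) ^ 2) ≤
      (2 * K / ((Real.sqrt Z + Real.sqrt Z') * Real.sqrt Z')
          + Real.sqrt K / Real.sqrt Z') *
        Real.sqrt ((1 / 2) * ∫ x, (Real.sqrt (ρ x) - Real.sqrt (ρ' x)) ^ 2) := by
  set r := Real.sqrt Z with hr_def
  set r' := Real.sqrt Z' with hr'_def
  have hr : 0 < r := Real.sqrt_pos.2 hZ
  have hr' : 0 < r' := Real.sqrt_pos.2 hZ'
  have hrne : r ≠ 0 := ne_of_gt hr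
  have hr'ne : r' ≠ 0 := ne_of_gt hr'
  have hr2 : r ^ 2 = Z := Real.sq_sqrt hZ.le
  have hr'2 : r' ^ 2 = Z' := Real.sq_sqrt hZ'.le
  -- measurability of square roots
  have hsm : Measurable fun x => Real.sqrt (ρ x) := hρm.sqrt
  have hs'm : Measurable fun x => Real.sqrt (ρ' x) := hρ'm.sqrt
  have ham : Measurable fun x => Real.sqrt (l x * ρ x) := (hlm.mul hρm).sqrt
  have hbm : Measurable fun x => Real.sqrt (l x * ρ' x) := (hlm.mul hρ'm).sqrt
  have hs2 : ∀ x, Real.sqrt (ρ x) ^ 2 = ρ x := fun x => Real.sq_sqrt (hρ0 x)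
  have hs'2 : ∀ x, Real.sqrt (ρ' x) ^ 2 = ρ' x := fun x => Real.sq_sqrt (hρ'0 x)
  -- K is nonnegative
  have hK0 : 0 ≤ K := by
    by_contra h
    push_neg at h
    have hDe : ∀ x, x ∉ D := by
      intro x hx
      exact absurd (le_trans (hl0 x) (hK x hx)) (not_le.2 h)
    have hz : ∀ x, ρ x = 0 := fun x => hρD x (hDe x)
    simp only [hz, integral_zero] at hρ1
    norm_num at hρ1
  -- integrability facts
  have hss' : Integrable (fun x => Real.sqrt (ρ x) * Real.sqrt (ρ' x)) := by
    refine Integrable.mono' ((hρi.add hρ'i).div_const 2)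
      (hsm.mul hs'm).aestronglyMeasurable (ae_of_all _ fun x => ?_)
    rw [Real.norm_eq_abs,
      abs_of_nonneg (mul_nonneg (Real.sqrt_nonneg _) (Real.sqrt_nonneg _))]
    show Real.sqrt (ρ x) * Real.sqrt (ρ' x) ≤ (ρ x + ρ' x) / 2
    nlinarith [hs2 x, hs'2 x, sq_nonneg (Real.sqrt (ρ x) - Real.sqrt (ρ' x))]
  have hIsm : Integrable (fun x => (Real.sqrt (ρ x) - Real.sqrt (ρ' x)) ^ 2) := by
    refine ((hρi.add hρ'i).sub (hss'.const_mul 2)).congr (ae_of_all _ fun x => ?_)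
    show ρ x + ρ' x - 2 * (Real.sqrt (ρ x) * Real.sqrt (ρ' x)) =
      (Real.sqrt (ρ x) - Real.sqrt (ρ' x)) ^ 2
    have e1 := hs2 x; have e2 := hs'2 x
    linear_combination -e1 - e2
  have hIsp : Integrable (fun x => (Real.sqrt (ρ x) + Real.sqrt (ρ' x)) ^ 2) := by
    refine ((hρi.add hρ'i).add (hss'.const_mul 2)).congr (ae_of_all _ fun x => ?_)
    show ρ x + ρ' x + 2 * (Real.sqrt (ρ x) * Real.sqrt (ρ' x)) =
      (Real.sqrt (ρ x) + Real.sqrt (ρ' x)) ^ 2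
    have e1 := hs2 x; have e2 := hs'2 x
    linear_combination -e1 - e2
  have hIa2 : Integrable (fun x => Real.sqrt (l x * ρ x) ^ 2) :=
    hlρ.congr (ae_of_all _ fun x => (Real.sq_sqrt (mul_nonneg (hl0 x) (hρ0 x))).symm)
  -- pointwise bound for the numerator difference
  have hptab : ∀ x, (Real.sqrt (l x * ρ x) - Real.sqrt (l x * ρ' x)) ^ 2 ≤
      K * (Real.sqrt (ρ x) - Real.sqrt (ρ' x)) ^ 2 := by
    intro x
    by_cases hx : x ∈ D
    · rw [Real.sqrt_mul (hl0 x), Real.sqrt_mul (hl0 x), ← mul_sub, mul_pow,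
        Real.sq_sqrt (hl0 x)]
      exact mul_le_mul_of_nonneg_right (hK x hx) (sq_nonneg _)
    · simp [hρD x hx, hρ'D x hx]
  have hIab2 : Integrable
      (fun x => (Real.sqrt (l x * ρ x) - Real.sqrt (l x * ρ' x)) ^ 2) := by
    refine Integrable.mono' (hIsm.const_mul K)
      ((ham.sub hbm).pow_const 2).aestronglyMeasurable (ae_of_all _ fun x => ?_)
    rw [Real.norm_eq_abs, abs_of_nonneg (sq_nonneg _)]
    exact hptab x
  set X := ∫ x, (Real.sqrt (ρ x) - Real.sqrt (ρ' x)) ^ 2 with hX_def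
  have hX0 : 0 ≤ X := integral_nonneg fun x => sq_nonneg _
  set S := Real.sqrt X with hS_def
  have hS0 : 0 ≤ S := Real.sqrt_nonneg _
  -- ∫ (a - b)^2 ≤ K * X
  have hab_int : ∫ x, (Real.sqrt (l x * ρ x) - Real.sqrt (l x * ρ' x)) ^ 2 ≤ K * X := by
    calc ∫ x, (Real.sqrt (l x * ρ x) - Real.sqrt (l x * ρ' x)) ^ 2
        ≤ ∫ x, K * (Real.sqrt (ρ x) - Real.sqrt (ρ' x)) ^ 2 :=
          integral_mono_of_nonneg (ae_of_all _ fun x => sq_nonneg _)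
            (hIsm.const_mul K) (ae_of_all _ hptab)
      _ = K * X := integral_const_mul _ _
  -- ∫ (s+s')^2 ≤ 4
  have hIs2 : Integrable (fun x => Real.sqrt (ρ x) ^ 2) :=
    hρi.congr (ae_of_all _ fun x => (hs2 x).symm)
  have hIs'2 : Integrable (fun x => Real.sqrt (ρ' x) ^ 2) :=
    hρ'i.congr (ae_of_all _ fun x => (hs'2 x).symm)
  have hss'_le : ∫ x, Real.sqrt (ρ x) * Real.sqrt (ρ' x) ≤ 1 := by
    have h := aux_cs hsm.aestronglyMeasurable hs'm.aestronglyMeasurable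
      (fun x => Real.sqrt_nonneg _) (fun x => Real.sqrt_nonneg _) hIs2 hIs'2
    have e1 : ∫ x, Real.sqrt (ρ x) ^ 2 = 1 := by
      rw [integral_congr_ae (ae_of_all _ hs2)]; exact hρ1
    have e2 : ∫ x, Real.sqrt (ρ' x) ^ 2 = 1 := by
      rw [integral_congr_ae (ae_of_all _ hs'2)]; exact hρ'1
    rw [e1, e2, Real.sqrt_one, one_mul] at h
    exact h
  have hsp_le : ∫ x, (Real.sqrt (ρ x) + Real.sqrt (ρ' x)) ^ 2 ≤ 4 := by
    have he : ∫ x, (Real.sqrt (ρ x) + Real.sqrt (ρ' x)) ^ 2 =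
        ∫ x, (ρ x + ρ' x + 2 * (Real.sqrt (ρ x) * Real.sqrt (ρ' x))) := by
      refine integral_congr_ae (ae_of_all _ fun x => ?_)
      have e1 := hs2 x; have e2 := hs'2 x
      linear_combination e1 + e2
    rw [he]
    have h1 : ∫ x, (ρ x + ρ' x + 2 * (Real.sqrt (ρ x) * Real.sqrt (ρ' x))) =
        (∫ x, (ρ x + ρ' x)) + ∫ x, 2 * (Real.sqrt (ρ x) * Real.sqrt (ρ' x)) :=
      integral_add (hρi.add hρ'i) (hss'.const_mul 2)
    have h2 : ∫ x, (ρ x + ρ' x) = (∫ x, ρ x) + ∫ x, ρ' x := integral_add hρi hρ'i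
    have h3 : ∫ x, 2 * (Real.sqrt (ρ x) * Real.sqrt (ρ' x)) =
        2 * ∫ x, Real.sqrt (ρ x) * Real.sqrt (ρ' x) := integral_const_mul _ _
    rw [h1, h2, h3, hρ1, hρ'1]
    linarith
  have hsp_sqrt : Real.sqrt (∫ x, (Real.sqrt (ρ x) + Real.sqrt (ρ' x)) ^ 2) ≤ 2 := by
    calc Real.sqrt (∫ x, (Real.sqrt (ρ x) + Real.sqrt (ρ' x)) ^ 2)
        ≤ Real.sqrt 4 := Real.sqrt_le_sqrt hsp_le
      _ = 2 := by rw [show (4:ℝ) = 2 ^ 2 by norm_num, Real.sqrt_sq (by norm_num : (0:ℝ) ≤ 2)]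
  -- |Z - Z'| ≤ 2 K S
  have habsZ : |Z - Z'| ≤ 2 * K * S := by
    have hZsub : Z - Z' = ∫ x, (l x * ρ x - l x * ρ' x) := by
      rw [hZdef, hZ'def, integral_sub hlρ hlρ']
    have hpt2 : ∀ x, |l x * ρ x - l x * ρ' x| ≤
        K * (|Real.sqrt (ρ x) - Real.sqrt (ρ' x)| *
          (Real.sqrt (ρ x) + Real.sqrt (ρ' x))) := by
      intro x
      by_cases hx : x ∈ D
      · have he : l x * ρ x - l x * ρ' x =
            l x * ((Real.sqrt (ρ x) - Real.sqrt (ρ' x)) *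
              (Real.sqrt (ρ x) + Real.sqrt (ρ' x))) := by
          have e1 := hs2 x; have e2 := hs'2 x
          linear_combination (-(l x)) * e1 + (l x) * e2
        rw [he, abs_mul, abs_mul, abs_of_nonneg (hl0 x),
          abs_of_nonneg (add_nonneg (Real.sqrt_nonneg _) (Real.sqrt_nonneg _))]
        exact mul_le_mul_of_nonneg_right (hK x hx)
          (mul_nonneg (abs_nonneg _)
            (add_nonneg (Real.sqrt_nonneg _) (Real.sqrt_nonneg _)))
      · simp [hρD x hx, hρ'D x hx]
    have hIm : Integrable (fun x => |Real.sqrt (ρ x) - Real.sqrt (ρ' x)| *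
        (Real.sqrt (ρ x) + Real.sqrt (ρ' x))) := by
      refine Integrable.mono' ((hIsm.add hIsp).div_const 2)
        ((hsm.sub hs'm).abs.mul (hsm.add hs'm)).aestronglyMeasurable
        (ae_of_all _ fun x => ?_)
      rw [Real.norm_eq_abs, abs_of_nonneg (mul_nonneg (abs_nonneg _)
        (add_nonneg (Real.sqrt_nonneg _) (Real.sqrt_nonneg _)))]
      show |Real.sqrt (ρ x) - Real.sqrt (ρ' x)| * (Real.sqrt (ρ x) + Real.sqrt (ρ' x)) ≤
        ((Real.sqrt (ρ x) - Real.sqrt (ρ' x)) ^ 2 +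
          (Real.sqrt (ρ x) + Real.sqrt (ρ' x)) ^ 2) / 2
      nlinarith [sq_nonneg (|Real.sqrt (ρ x) - Real.sqrt (ρ' x)| -
        (Real.sqrt (ρ x) + Real.sqrt (ρ' x))),
        sq_abs (Real.sqrt (ρ x) - Real.sqrt (ρ' x))]
    have hCS1 : ∫ x, |Real.sqrt (ρ x) - Real.sqrt (ρ' x)| *
        (Real.sqrt (ρ x) + Real.sqrt (ρ' x)) ≤
        S * Real.sqrt (∫ x, (Real.sqrt (ρ x) + Real.sqrt (ρ' x)) ^ 2) := by
      have h := aux_cs ((hsm.sub hs'm).abs).aestronglyMeasurable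
        (hsm.add hs'm).aestronglyMeasurable (fun x => abs_nonneg _)
        (fun x => add_nonneg (Real.sqrt_nonneg _) (Real.sqrt_nonneg _))
        (by simpa [sq_abs] using hIsm) hIsp
      simpa [sq_abs] using h
    calc |Z - Z'| = |∫ x, (l x * ρ x - l x * ρ' x)| := by rw [hZsub]
      _ ≤ ∫ x, |l x * ρ x - l x * ρ' x| := by
          simpa [Real.norm_eq_abs] using
            norm_integral_le_integral_norm (μ := volume)
              fun x => l x * ρ x - l x * ρ' x
      _ ≤ ∫ x, K * (|Real.sqrt (ρ x) - Real.sqrt (ρ' x)| *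
          (Real.sqrt (ρ x) + Real.sqrt (ρ' x))) :=
        integral_mono_of_nonneg (ae_of_all _ fun x => abs_nonneg _)
          (hIm.const_mul K) (ae_of_all _ hpt2)
      _ = K * ∫ x, |Real.sqrt (ρ x) - Real.sqrt (ρ' x)| *
          (Real.sqrt (ρ x) + Real.sqrt (ρ' x)) := integral_const_mul _ _
      _ ≤ K * (S * 2) := by
        refine mul_le_mul_of_nonneg_left ?_ hK0
        calc ∫ x, |Real.sqrt (ρ x) - Real.sqrt (ρ' x)| *
            (Real.sqrt (ρ x) + Real.sqrt (ρ' x)) ≤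
            S * Real.sqrt (∫ x, (Real.sqrt (ρ x) + Real.sqrt (ρ' x)) ^ 2) := hCS1
          _ ≤ S * 2 := mul_le_mul_of_nonneg_left hsp_sqrt hS0
      _ = 2 * K * S := by ring
  -- |r - r'| ≤ 2 K S / (r + r')
  have hrr' : |r - r'| ≤ 2 * K * S / (r + r') := by
    rw [le_div_iff₀ (by positivity)]
    have he : (r - r') * (r + r') = Z - Z' := by linear_combination hr2 - hr'2
    calc |r - r'| * (r + r') = |(r - r') * (r + r')| := by
          rw [abs_mul, abs_of_pos (add_pos hr hr')]
      _ = |Z - Z'| := by rw [he]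
      _ ≤ 2 * K * S := habsZ
  -- decompose the posterior difference
  set T := ∫ x, (Real.sqrt (l x * ρ x / Z) - Real.sqrt (l x * ρ' x / Z')) ^ 2 with hT_def
  have hTeq : T = ∫ x, ((1 / r') * (Real.sqrt (l x * ρ x) - Real.sqrt (l x * ρ' x)) +
      (1 / r - 1 / r') * Real.sqrt (l x * ρ x)) ^ 2 := by
    refine integral_congr_ae (ae_of_all _ fun x => ?_)
    have hbase : Real.sqrt (l x * ρ x / Z) - Real.sqrt (l x * ρ' x / Z') =
        (1 / r') * (Real.sqrt (l x * ρ x) - Real.sqrt (l x * ρ' x)) +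
          (1 / r - 1 / r') * Real.sqrt (l x * ρ x) := by
      rw [Real.sqrt_div (mul_nonneg (hl0 x) (hρ0 x)) Z,
        Real.sqrt_div (mul_nonneg (hl0 x) (hρ'0 x)) Z']
      rw [← hr_def, ← hr'_def]
      field_simp
      ring
    show (Real.sqrt (l x * ρ x / Z) - Real.sqrt (l x * ρ' x / Z')) ^ 2 =
      ((1 / r') * (Real.sqrt (l x * ρ x) - Real.sqrt (l x * ρ' x)) +
        (1 / r - 1 / r') * Real.sqrt (l x * ρ x)) ^ 2
    rw [hbase]
  have hu2' : Integrable (fun x =>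
      ((1 / r') * (Real.sqrt (l x * ρ x) - Real.sqrt (l x * ρ' x))) ^ 2) :=
    (hIab2.const_mul ((1 / r') ^ 2)).congr (ae_of_all _ fun x => by ring)
  have hv2' : Integrable (fun x =>
      ((1 / r - 1 / r') * Real.sqrt (l x * ρ x)) ^ 2) :=
    (hIa2.const_mul ((1 / r - 1 / r') ^ 2)).congr (ae_of_all _ fun x => by ring)
  have hmink := aux_mink
    (((ham.sub hbm).const_mul (1 / r')).aestronglyMeasurable)
    ((ham.const_mul (1 / r - 1 / r')).aestronglyMeasurable) hu2' hv2'
  -- evaluate both terms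
  have hterm1 : Real.sqrt (∫ x,
      ((1 / r') * (Real.sqrt (l x * ρ x) - Real.sqrt (l x * ρ' x))) ^ 2) ≤
      (1 / r') * (Real.sqrt K * S) := by
    have he : ∫ x, ((1 / r') * (Real.sqrt (l x * ρ x) - Real.sqrt (l x * ρ' x))) ^ 2 =
        (1 / r') ^ 2 * ∫ x, (Real.sqrt (l x * ρ x) - Real.sqrt (l x * ρ' x)) ^ 2 := by
      rw [← integral_const_mul]
      exact integral_congr_ae (ae_of_all _ fun x => by ring)
    rw [he, Real.sqrt_mul (sq_nonneg _), Real.sqrt_sq (by positivity)]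
    refine mul_le_mul_of_nonneg_left ?_ (by positivity)
    calc Real.sqrt (∫ x, (Real.sqrt (l x * ρ x) - Real.sqrt (l x * ρ' x)) ^ 2)
        ≤ Real.sqrt (K * X) := Real.sqrt_le_sqrt hab_int
      _ = Real.sqrt K * S := Real.sqrt_mul hK0 _
  have hterm2 : Real.sqrt (∫ x,
      ((1 / r - 1 / r') * Real.sqrt (l x * ρ x)) ^ 2) ≤
      2 * K * S / ((r + r') * r') := by
    have he : ∫ x, ((1 / r - 1 / r') * Real.sqrt (l x * ρ x)) ^ 2 =
        (1 / r - 1 / r') ^ 2 * ∫ x, Real.sqrt (l x * ρ x) ^ 2 := by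
      rw [← integral_const_mul]
      exact integral_congr_ae (ae_of_all _ fun x => by ring)
    have ha2Z : ∫ x, Real.sqrt (l x * ρ x) ^ 2 = Z := by
      rw [integral_congr_ae (ae_of_all _ fun x =>
        Real.sq_sqrt (mul_nonneg (hl0 x) (hρ0 x)))]
      exact hZdef.symm
    rw [he, ha2Z, Real.sqrt_mul (sq_nonneg _), Real.sqrt_sq_eq_abs, ← hr_def]
    have heq : |1 / r - 1 / r'| * r = |r - r'| / r' := by
      have h1 : 1 / r - 1 / r' = (r' - r) / (r * r') := by field_simp
      rw [h1, abs_div, abs_of_pos (mul_pos hr hr'), abs_sub_comm]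
      field_simp
    rw [heq]
    calc |r - r'| / r' ≤ (2 * K * S / (r + r')) / r' := by gcongr
      _ = 2 * K * S / ((r + r') * r') := by field_simp
  -- put everything together
  have hT_le : Real.sqrt T ≤
      (2 * K / ((r + r') * r') + Real.sqrt K / r') * S := by
    have hC : (2 * K / ((r + r') * r') + Real.sqrt K / r') * S =
        (1 / r') * (Real.sqrt K * S) + 2 * K * S / ((r + r') * r') := by
      field_simp
      ring
    rw [hTeq, hC]
    calc Real.sqrt (∫ x, ((1 / r') * (Real.sqrt (l x * ρ x) - Real.sqrt (l x * ρ' x)) +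
          (1 / r - 1 / r') * Real.sqrt (l x * ρ x)) ^ 2)
        ≤ Real.sqrt (∫ x,
            ((1 / r') * (Real.sqrt (l x * ρ x) - Real.sqrt (l x * ρ' x))) ^ 2) +
          Real.sqrt (∫ x, ((1 / r - 1 / r') * Real.sqrt (l x * ρ x)) ^ 2) := hmink
      _ ≤ (1 / r') * (Real.sqrt K * S) + 2 * K * S / ((r + r') * r') :=
          add_le_add hterm1 hterm2
  rw [Real.sqrt_mul (by norm_num : (0:ℝ) ≤ 1 / 2), Real.sqrt_mul (by norm_num : (0:ℝ) ≤ 1 / 2)]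
  calc Real.sqrt (1 / 2) * Real.sqrt T
      ≤ Real.sqrt (1 / 2) * ((2 * K / ((r + r') * r') + Real.sqrt K / r') * S) :=
        mul_le_mul_of_nonneg_left hT_le (Real.sqrt_nonneg _)
    _ = (2 * K / ((r + r') * r') + Real.sqrt K / r') * (Real.sqrt (1 / 2) * S) := by ring
end

section
/- Posterior approximation under surrogate forward model: under the assumptions sup_{u∈D}|√l(u)−√l_δ(u)| ≤ K₁δ, sup_{u∈D}(√l+√l_δ) ≤ K₂, and Z = ∫lρ > 0, there exist constants c ∈ (0,∞) and Δ > 0 such that for all δ ∈ (0,Δ) the posteriors π = lρ/Z and π_δ = l_δρ/Z_δ satisfy D_H(π, π_δ) ≤ cδ. -/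
open MeasureTheory

set_option maxHeartbeats 800000

/-- Posterior approximation under a surrogate forward model: if
`sup_{u∈D}|√l(u)−√l_δ(u)| ≤ K₁δ`, `sup_{u∈D}(√l+√l_δ) ≤ K₂` and `Z = ∫lρ > 0`,
then there exist `c ∈ (0,∞)` and `Δ > 0` such that for all `δ ∈ (0,Δ)` the
posteriors `π = lρ/Z` and `π_δ = l_δρ/Z_δ` satisfy `D_H(π,π_δ) ≤ cδ`. -/
theorem posterior_surrogate_approximation {d : ℕ}
    (D : Set (Fin d → ℝ)) (hD : IsOpen D) (hDb : Bornology.IsBounded D)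
    (ρ l : (Fin d → ℝ) → ℝ) (lδ : ℝ → (Fin d → ℝ) → ℝ) (K₁ K₂ δp : ℝ)
    (hK₁ : 0 < K₁) (hK₂ : 0 < K₂) (hδp : 0 < δp)
    (hρm : Measurable ρ) (hlm : Measurable l) (hlδm : ∀ δ, Measurable (lδ δ))
    (hρ0 : ∀ x, 0 ≤ ρ x) (hl0 : ∀ x, 0 ≤ l x) (hlδ0 : ∀ δ x, 0 ≤ lδ δ x)
    (hρD : ∀ x ∉ D, ρ x = 0)
    (hρi : Integrable ρ) (hρ1 : (∫ x, ρ x) = 1)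
    (h1 : ∀ δ, 0 < δ → δ < δp → ∀ u ∈ D,
      |Real.sqrt (l u) - Real.sqrt (lδ δ u)| ≤ K₁ * δ)
    (h2 : ∀ δ, 0 < δ → δ < δp → ∀ u ∈ D,
      Real.sqrt (l u) + Real.sqrt (lδ δ u) ≤ K₂)
    (hlρ : Integrable (fun x => l x * ρ x))
    (hlδρ : ∀ δ, Integrable (fun x => lδ δ x * ρ x))
    (hZ : 0 < ∫ x, l x * ρ x) :
    ∃ c > (0 : ℝ), ∃ Δ > (0 : ℝ), ∀ δ : ℝ, 0 < δ → δ < Δ →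
      Real.sqrt ((1 / 2) * ∫ x,
          (Real.sqrt (l x * ρ x / (∫ y, l y * ρ y)) -
            Real.sqrt (lδ δ x * ρ x / (∫ y, lδ δ y * ρ y))) ^ 2) ≤ c * δ := by
  set Z := ∫ x, l x * ρ x with hZdef
  have hZ0 : 0 < Z := hZ
  have hsZ : 0 < Real.sqrt Z := Real.sqrt_pos.mpr hZ0
  have hsZ2 : 0 < Real.sqrt (Z / 2) := Real.sqrt_pos.mpr (by linarith)
  set c : ℝ := K₁ / Real.sqrt Z + K₁ * K₂ ^ 2 / (Z * Real.sqrt (Z / 2)) with hcdef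
  have hc : 0 < c := by positivity
  refine ⟨c, hc, min δp (Z / (2 * K₁ * K₂)), lt_min hδp (by positivity), ?_⟩
  intro δ hδ0 hδΔ
  have hδp' : δ < δp := lt_of_lt_of_le hδΔ (min_le_left _ _)
  have hδZ : K₁ * K₂ * δ < Z / 2 := by
    have h := lt_of_lt_of_le hδΔ (min_le_right _ _)
    have := mul_lt_mul_of_pos_left h (show (0:ℝ) < K₁ * K₂ by positivity)
    calc K₁ * K₂ * δ < K₁ * K₂ * (Z / (2 * K₁ * K₂)) := this
      _ = Z / 2 := by field_simp
  set Zδ := ∫ x, lδ δ x * ρ x with hZδdef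
  -- Step A : |Z - Zδ| ≤ K₁ K₂ δ
  have hpt : ∀ x, |(l x - lδ δ x) * ρ x| ≤ K₁ * K₂ * δ * ρ x := by
    intro x
    by_cases hx : x ∈ D
    · rw [abs_mul, abs_of_nonneg (hρ0 x)]
      apply mul_le_mul_of_nonneg_right _ (hρ0 x)
      have h1' := h1 δ hδ0 hδp' x hx
      have h2' := h2 δ hδ0 hδp' x hx
      have e : l x - lδ δ x =
          (Real.sqrt (l x) - Real.sqrt (lδ δ x)) *
          (Real.sqrt (l x) + Real.sqrt (lδ δ x)) := by
        linear_combination Real.sq_sqrt (hlδ0 δ x) - Real.sq_sqrt (hl0 x)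
      have hnn : (0:ℝ) ≤ Real.sqrt (l x) + Real.sqrt (lδ δ x) := by positivity
      rw [e, abs_mul, abs_of_nonneg hnn]
      calc |Real.sqrt (l x) - Real.sqrt (lδ δ x)| *
            (Real.sqrt (l x) + Real.sqrt (lδ δ x))
          ≤ (K₁ * δ) * K₂ := by
            apply mul_le_mul h1' h2' hnn (by positivity)
        _ = K₁ * K₂ * δ := by ring
    · rw [hρD x hx]; simp
  have hintdiff : Integrable (fun x => (l x - lδ δ x) * ρ x) := by
    have := hlρ.sub (hlδρ δ)
    simpa [sub_mul, Pi.sub_def] using this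
  have hsub : Z - Zδ = ∫ x, (l x - lδ δ x) * ρ x := by
    rw [hZdef, hZδdef, ← integral_sub hlρ (hlδρ δ)]
    congr 1; ext x; ring
  have habs : |Z - Zδ| ≤ K₁ * K₂ * δ := by
    rw [hsub]
    calc |∫ x, (l x - lδ δ x) * ρ x| ≤ ∫ x, |(l x - lδ δ x) * ρ x| := by
          have h := norm_integral_le_integral_norm
            (μ := volume) (fun x => (l x - lδ δ x) * ρ x)
          simpa only [Real.norm_eq_abs] using h
      _ ≤ ∫ x, K₁ * K₂ * δ * ρ x := integral_mono hintdiff.abs (hρi.const_mul _) hpt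
      _ = K₁ * K₂ * δ := by rw [integral_const_mul, hρ1, mul_one]
  have hZδb : Z / 2 ≤ Zδ := by
    have := abs_le.mp habs
    linarith [this.2]
  have hZδ0 : 0 < Zδ := by linarith
  have hsZδ : Real.sqrt (Z / 2) ≤ Real.sqrt Zδ := Real.sqrt_le_sqrt hZδb
  have hsZδ0 : 0 < Real.sqrt Zδ := lt_of_lt_of_le hsZ2 hsZδ
  -- Step C : pointwise bound
  have hptb : ∀ x, (Real.sqrt (l x * ρ x / Z) - Real.sqrt (lδ δ x * ρ x / Zδ)) ^ 2
      ≤ (c * δ) ^ 2 * ρ x := by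
    intro x
    by_cases hx : x ∈ D
    · set a := Real.sqrt (l x) with ha
      set b := Real.sqrt (lδ δ x) with hb
      set r := Real.sqrt (ρ x) with hr
      set s := Real.sqrt Z with hs
      set t := Real.sqrt Zδ with ht
      have ea : Real.sqrt (l x * ρ x / Z) = a * r / s := by
        rw [Real.sqrt_div (mul_nonneg (hl0 x) (hρ0 x)), Real.sqrt_mul (hl0 x)]
      have eb : Real.sqrt (lδ δ x * ρ x / Zδ) = b * r / t := by
        rw [Real.sqrt_div (mul_nonneg (hlδ0 δ x) (hρ0 x)), Real.sqrt_mul (hlδ0 δ x)]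
      rw [ea, eb]
      have h1' := h1 δ hδ0 hδp' x hx
      have h2' := h2 δ hδ0 hδp' x hx
      have ha0 : 0 ≤ a := Real.sqrt_nonneg _
      have hb0 : 0 ≤ b := Real.sqrt_nonneg _
      have hr0 : 0 ≤ r := Real.sqrt_nonneg _
      have hbK : b ≤ K₂ := by linarith
      have hts : |t - s| ≤ K₁ * K₂ * δ / s := by
        have hsq : t ^ 2 = Zδ := Real.sq_sqrt (le_of_lt hZδ0)
        have hsq' : s ^ 2 = Z := Real.sq_sqrt (le_of_lt hZ0)
        have key : |t - s| * (t + s) = |Zδ - Z| := by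
          rw [← abs_of_nonneg (show (0:ℝ) ≤ t + s by positivity), ← abs_mul]
          congr 1
          have h := Real.sq_sqrt (le_of_lt hZδ0)
          have h' := Real.sq_sqrt (le_of_lt hZ0)
          linear_combination h - h'
        have h1 : |Zδ - Z| ≤ K₁ * K₂ * δ := by rwa [abs_sub_comm]
        have hts' : |t - s| * s ≤ K₁ * K₂ * δ := by
          calc |t - s| * s ≤ |t - s| * (t + s) := by
                apply mul_le_mul_of_nonneg_left _ (abs_nonneg _)
                linarith [hsZδ0]
            _ = |Zδ - Z| := key
            _ ≤ K₁ * K₂ * δ := h1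
        rw [le_div_iff₀ hsZ]
        exact hts'
      -- numerator bound : |a*t - b*s| ≤ K₁ δ t + K₁ K₂² δ / s
      have hnum : |a * t - b * s| ≤ K₁ * δ * t + K₁ * K₂ ^ 2 * δ / s := by
        have e2 : a * t - b * s = (a - b) * t + b * (t - s) := by ring
        calc |a * t - b * s| ≤ |(a - b) * t| + |b * (t - s)| := by
              rw [e2]; exact abs_add_le _ _
          _ = |a - b| * t + b * |t - s| := by
              rw [abs_mul, abs_mul, abs_of_nonneg (le_of_lt hsZδ0), abs_of_nonneg hb0]
          _ ≤ (K₁ * δ) * t + K₂ * (K₁ * K₂ * δ / s) := by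
              gcongr
          _ = K₁ * δ * t + K₁ * K₂ ^ 2 * δ / s := by ring
      -- so |a/s - b/t| ≤ c δ
      have hdiv : |a / s - b / t| ≤ c * δ := by
        have hfrac : a / s - b / t = (a * t - b * s) / (s * t) := by
          field_simp
        rw [hfrac, abs_div, abs_of_nonneg (le_of_lt (mul_pos hsZ hsZδ0))]
        rw [div_le_iff₀ (mul_pos hsZ hsZδ0)]
        have hcδ : c * δ * (s * t) = (K₁ * δ / s) * (s * t) +
            (K₁ * K₂ ^ 2 * δ / (Z * Real.sqrt (Z / 2))) * (s * t) := by
          rw [hcdef]; ring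
        calc |a * t - b * s| ≤ K₁ * δ * t + K₁ * K₂ ^ 2 * δ / s := hnum
          _ ≤ c * δ * (s * t) := by
              rw [hcδ]
              have e1 : (K₁ * δ / s) * (s * t) = K₁ * δ * t := by
                field_simp
              rw [e1]
              have hsq' : s * s = Z := Real.mul_self_sqrt (le_of_lt hZ0)
              have e3 : K₁ * K₂ ^ 2 * δ / s ≤
                  (K₁ * K₂ ^ 2 * δ / (Z * Real.sqrt (Z / 2))) * (s * t) := by
                rw [div_le_iff₀ hsZ, div_mul_eq_mul_div, div_mul_eq_mul_div,
                  le_div_iff₀ (by positivity : (0:ℝ) < Z * Real.sqrt (Z/2))]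
                have : Z * Real.sqrt (Z / 2) ≤ s * t * s := by
                  calc Z * Real.sqrt (Z / 2) = s * s * Real.sqrt (Z / 2) := by rw [hsq']
                    _ ≤ s * s * t := by gcongr
                    _ = s * t * s := by ring
                nlinarith [mul_nonneg (mul_nonneg hK₁.le (sq_nonneg K₂)) hδ0.le]
              linarith
      have hdiff : |a * r / s - b * r / t| ≤ c * δ * r := by
        have e : a * r / s - b * r / t = r * (a / s - b / t) := by ring
        rw [e, abs_mul, abs_of_nonneg hr0, mul_comm (c * δ) r]
        exact mul_le_mul_of_nonneg_left hdiv hr0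
      have hrr : r ^ 2 = ρ x := Real.sq_sqrt (hρ0 x)
      calc (a * r / s - b * r / t) ^ 2 = |a * r / s - b * r / t| ^ 2 := (sq_abs _).symm
        _ ≤ (c * δ * r) ^ 2 := by
            apply pow_le_pow_left₀ (abs_nonneg _) hdiff
        _ = (c * δ) ^ 2 * ρ x := by rw [mul_pow, hrr]
    · rw [hρD x hx]
      simp
  -- Step D : integrate
  have hmeas : Measurable (fun x =>
      (Real.sqrt (l x * ρ x / Z) - Real.sqrt (lδ δ x * ρ x / Zδ)) ^ 2) := by
    apply Measurable.pow_const
    exact (((hlm.mul hρm).div_const _).sqrt.sub (((hlδm δ).mul hρm).div_const _).sqrt)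
  have hbound_int : Integrable (fun x => (c * δ) ^ 2 * ρ x) := hρi.const_mul _
  have hInt : Integrable (fun x =>
      (Real.sqrt (l x * ρ x / Z) - Real.sqrt (lδ δ x * ρ x / Zδ)) ^ 2) := by
    apply hbound_int.mono' hmeas.aestronglyMeasurable
    filter_upwards with x
    rw [Real.norm_eq_abs, abs_of_nonneg (sq_nonneg _)]
    exact hptb x
  have hIle : (∫ x, (Real.sqrt (l x * ρ x / Z) - Real.sqrt (lδ δ x * ρ x / Zδ)) ^ 2)
      ≤ (c * δ) ^ 2 := by
    calc (∫ x, (Real.sqrt (l x * ρ x / Z) - Real.sqrt (lδ δ x * ρ x / Zδ)) ^ 2)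
        ≤ ∫ x, (c * δ) ^ 2 * ρ x := integral_mono hInt hbound_int hptb
      _ = (c * δ) ^ 2 := by rw [integral_const_mul, hρ1, mul_one]
  have hInn : (0:ℝ) ≤ ∫ x, (Real.sqrt (l x * ρ x / Z) - Real.sqrt (lδ δ x * ρ x / Zδ)) ^ 2 :=
    integral_nonneg (fun x => sq_nonneg _)
  calc Real.sqrt ((1 / 2) * ∫ x,
        (Real.sqrt (l x * ρ x / Z) - Real.sqrt (lδ δ x * ρ x / Zδ)) ^ 2)
      ≤ Real.sqrt ((c * δ) ^ 2) := Real.sqrt_le_sqrt (by linarith)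
    _ = c * δ := Real.sqrt_sq (by positivity)
end

section
/- Total variation stability of the smoothing posterior under prior perturbation: if the likelihood V ↦ l(V) is uniformly bounded, Z := ∫ l ρ > 0, and Z′ := ∫ l ρ′ > 0, then there is a constant C > 0 such that for D_TV(ρ,ρ′) sufficiently small, the posteriors Π ∝ lρ and Π′ ∝ lρ′ satisfy D_TV(Π,Π′) ≤ C·D_TV(ρ,ρ′). -/
open MeasureTheory

/-- Total variation stability of the smoothing posterior under prior
perturbation: if the likelihood l is uniformly bounded, `Z = ∫lρ > 0` and
`Z′ = ∫lρ′ > 0`, then there is a constant `C > 0` such that for `D_TV(ρ,ρ′)`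
sufficiently small, the posteriors `Π = lρ/Z` and `Π′ = lρ′/Z′` satisfy
`D_TV(Π,Π′) ≤ C·D_TV(ρ,ρ′)`. -/
theorem smoothing_posterior_tv_stability {m : ℕ}
    (ρ l : (Fin m → ℝ) → ℝ) (M Z : ℝ)
    (hρm : Measurable ρ) (hlm : Measurable l)
    (hρ0 : ∀ V, 0 ≤ ρ V) (hl0 : ∀ V, 0 ≤ l V) (hlM : ∀ V, l V ≤ M)
    (hρi : Integrable ρ) (hρ1 : (∫ V, ρ V) = 1)
    (hlρ : Integrable (fun V => l V * ρ V))
    (hZdef : Z = ∫ V, l V * ρ V) (hZ : 0 < Z) :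
    ∃ C > (0 : ℝ), ∃ ε > (0 : ℝ), ∀ ρ' : (Fin m → ℝ) → ℝ,
      Measurable ρ' → (∀ V, 0 ≤ ρ' V) → Integrable ρ' → (∫ V, ρ' V) = 1 →
      Integrable (fun V => l V * ρ' V) → 0 < (∫ V, l V * ρ' V) →
      (1 / 2) * (∫ V, |ρ V - ρ' V|) ≤ ε →
      (1 / 2) * (∫ V, |l V * ρ V / Z - l V * ρ' V / (∫ W, l W * ρ' W)|) ≤
        C * ((1 / 2) * ∫ V, |ρ V - ρ' V|) := by
  have hM0 : 0 ≤ M := le_trans (hl0 (fun _ => 0)) (hlM (fun _ => 0))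
  refine ⟨2 * (M + 1) / Z, by positivity, 1, one_pos, ?_⟩
  intro ρ' hρ'm hρ'0 hρ'i hρ'1 hlρ' hZ'pos _
  set Z' : ℝ := ∫ V, l V * ρ' V with hZ'def
  have hZne : Z ≠ 0 := hZ.ne'
  have hZ'ne : Z' ≠ 0 := hZ'pos.ne'
  set δ : ℝ := ∫ V, |ρ V - ρ' V| with hδdef
  have hδ0 : 0 ≤ δ := integral_nonneg fun V => abs_nonneg _
  have habs : Integrable (fun V => |ρ V - ρ' V|) := (hρi.sub hρ'i).abs
  have hpt1 : ∀ V, |l V * ρ V - l V * ρ' V| = l V * |ρ V - ρ' V| := fun V => by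
    rw [← mul_sub, abs_mul, abs_of_nonneg (hl0 V)]
  have hlabs : Integrable (fun V => l V * |ρ V - ρ' V|) := by
    have h := (hlρ.sub hlρ').abs
    refine h.congr ?_
    filter_upwards with V
    simp only [Pi.sub_apply]
    exact hpt1 V
  -- Step A : |Z - Z'| ≤ ∫ l |ρ - ρ'|
  have hA : |Z - Z'| ≤ ∫ V, l V * |ρ V - ρ' V| := by
    have he : Z - Z' = ∫ V, (l V * ρ V - l V * ρ' V) := by
      rw [hZdef, hZ'def, integral_sub hlρ hlρ']
    rw [he]
    calc |∫ V, (l V * ρ V - l V * ρ' V)| ≤ ∫ V, |l V * ρ V - l V * ρ' V| := by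
          simpa [Real.norm_eq_abs] using
            norm_integral_le_integral_norm (fun V => l V * ρ V - l V * ρ' V)
      _ = ∫ V, l V * |ρ V - ρ' V| := by simp_rw [hpt1]
  -- Step B : ∫ l |ρ - ρ'| ≤ M δ
  have hB : (∫ V, l V * |ρ V - ρ' V|) ≤ M * δ := by
    have h := integral_mono hlabs (habs.const_mul M)
      (fun V => mul_le_mul_of_nonneg_right (hlM V) (abs_nonneg _))
    simpa [integral_const_mul] using h
  -- Pointwise bound
  set g : (Fin m → ℝ) → ℝ :=
    fun V => l V * |ρ V - ρ' V| / Z + l V * ρ' V * (|Z - Z'| / (Z * Z')) with hgdef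
  have hgi : Integrable g := (hlabs.div_const Z).add (hlρ'.mul_const _)
  have hptbd : ∀ V, |l V * ρ V / Z - l V * ρ' V / Z'| ≤ g V := by
    intro V
    have key : l V * ρ V / Z - l V * ρ' V / Z' =
        (l V * ρ V - l V * ρ' V) / Z + l V * ρ' V * ((Z' - Z) / (Z * Z')) := by
      field_simp
      ring
    rw [key]
    calc |(l V * ρ V - l V * ρ' V) / Z + l V * ρ' V * ((Z' - Z) / (Z * Z'))|
        ≤ |(l V * ρ V - l V * ρ' V) / Z| + |l V * ρ' V * ((Z' - Z) / (Z * Z'))| :=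
          abs_add_le _ _
      _ = l V * |ρ V - ρ' V| / Z + l V * ρ' V * (|Z - Z'| / (Z * Z')) := by
          rw [abs_div, hpt1, abs_of_pos hZ, abs_mul (l V * ρ' V),
            abs_of_nonneg (mul_nonneg (hl0 V) (hρ'0 V)), abs_div,
            abs_of_pos (mul_pos hZ hZ'pos), abs_sub_comm Z' Z]
  have hdi : Integrable (fun V => |l V * ρ V / Z - l V * ρ' V / Z'|) :=
    ((hlρ.div_const Z).sub (hlρ'.div_const Z')).abs
  have hImain : (∫ V, |l V * ρ V / Z - l V * ρ' V / Z'|) ≤ ∫ V, g V :=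
    integral_mono hdi hgi hptbd
  have hgint : (∫ V, g V) =
      (∫ V, l V * |ρ V - ρ' V|) / Z + Z' * (|Z - Z'| / (Z * Z')) := by
    rw [hgdef, integral_add (hlabs.div_const Z) (hlρ'.mul_const _),
      integral_div, integral_mul_const, ← hZ'def]
  have hZ'cancel : Z' * (|Z - Z'| / (Z * Z')) = |Z - Z'| / Z := by
    field_simp
  have hbound : (∫ V, |l V * ρ V / Z - l V * ρ' V / Z'|) ≤ M * δ / Z + M * δ / Z := by
    have h1 : (∫ V, g V) ≤ M * δ / Z + M * δ / Z := by
      rw [hgint, hZ'cancel]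
      gcongr
      · exact le_trans hA hB
    linarith
  -- conclude
  have hRHS : 2 * (M + 1) / Z * ((1 / 2) * δ) = (M + 1) * δ / Z := by ring
  rw [hRHS]
  have h2 : M * δ / Z ≤ (M + 1) * δ / Z := by
    gcongr
    linarith
  linarith
end

section
/- 3DVar long-time accuracy with model error: suppose the truth evolves as v†_{j+1} = Ψ(v†_j) with linear observations y†_{j+1} = Hv†_{j+1} + η†_{j+1}, and 3DVar updates m_{j+1} = (I−KH)Ψᵃ(m_j) + Ky†_{j+1} with approximate model Ψᵃ. If sup_v |(I−KH)DΨ(v)| ≤ λ < 1, sup_v |(I−KH)(Ψ(v)−Ψᵃ(v))| = δ, and ε = E|Kη_j|, then limsup_{j→∞} E|m_j − v†_j| ≤ (ε + δ)/(1 − λ). -/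
/-!
The error `e_j = m_j − v†_j` satisfies
`e_{j+1} = [(I−KH)Ψ(m_j) − (I−KH)Ψ(v†_j)] − (I−KH)(Ψ − Ψᵃ)(m_j) + Kη_{j+1}`.
By the mean value theorem the bracket has norm at most `λ|e_j|`, so taking expectations
`E|e_{j+1}| ≤ λ E|e_j| + δ + ε`, and the discrete Gronwall inequality gives
`E|e_j| ≤ λ^j (E|e_0| − L) + L` with `L = (ε + δ)/(1 − λ)`.
-/

open MeasureTheory Filter

theorem ContinuousLinearMap.norm_map_sub_map_le_of_norm_comp_fderiv_le
    {E F G : Type*} [NormedAddCommGroup E] [NormedSpace ℝ E] [NormedAddCommGroup F]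
    [NormedSpace ℝ F] [NormedAddCommGroup G] [NormedSpace ℝ G]
    (T : F →L[ℝ] G) {f : E → F} {lam : ℝ} (hf : Differentiable ℝ f)
    (hT : ∀ v, ‖T.comp (fderiv ℝ f v)‖ ≤ lam) (x y : E) :
    ‖T (f x) - T (f y)‖ ≤ lam * ‖x - y‖ :=
  convex_univ.norm_image_sub_le_of_norm_hasFDerivWithin_le
    (fun z _ => (T.hasFDerivAt.comp z (hf z).hasFDerivAt).hasFDerivWithinAt)
    (fun z _ => hT z) (Set.mem_univ y) (Set.mem_univ x)

theorem le_pow_mul_add_of_le_mul_add {a : ℕ → ℝ} {lam c : ℝ} (hlam0 : 0 ≤ lam) (hlam1 : lam < 1)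
    (hrec : ∀ j, a (j + 1) ≤ lam * a j + c) (j : ℕ) :
    a j ≤ lam ^ j * (a 0 - c / (1 - lam)) + c / (1 - lam) := by
  have hfix : lam * (c / (1 - lam)) + c = c / (1 - lam) := by
    field_simp [(sub_pos.2 hlam1).ne']
    ring
  induction j with
  | zero => simp
  | succ n ih =>
    calc a (n + 1) ≤ lam * a n + c := hrec n
      _ ≤ lam * (lam ^ n * (a 0 - c / (1 - lam)) + c / (1 - lam)) + c := by gcongr
      _ = lam ^ (n + 1) * (a 0 - c / (1 - lam)) + (lam * (c / (1 - lam)) + c) := by ring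
      _ = lam ^ (n + 1) * (a 0 - c / (1 - lam)) + c / (1 - lam) := by rw [hfix]

theorem limsup_le_div_one_sub_of_le_mul_add {a : ℕ → ℝ} {lam c : ℝ} (hlam0 : 0 ≤ lam)
    (hlam1 : lam < 1) (ha : ∀ j, 0 ≤ a j) (hrec : ∀ j, a (j + 1) ≤ lam * a j + c) :
    limsup a atTop ≤ c / (1 - lam) := by
  have hbound : Tendsto (fun j => lam ^ j * (a 0 - c / (1 - lam)) + c / (1 - lam)) atTop
      (nhds (c / (1 - lam))) := by
    simpa using ((tendsto_pow_atTop_nhds_zero_of_lt_one hlam0 hlam1).mul_const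
      (a 0 - c / (1 - lam))).add_const (c / (1 - lam))
  calc limsup a atTop
      ≤ limsup (fun j => lam ^ j * (a 0 - c / (1 - lam)) + c / (1 - lam)) atTop :=
        limsup_le_limsup (Eventually.of_forall (le_pow_mul_add_of_le_mul_add hlam0 hlam1 hrec))
          (isCoboundedUnder_le_of_le atTop ha) hbound.isBoundedUnder_le
    _ = c / (1 - lam) := hbound.limsup_eq

theorem norm_threeDVar_update_sub_le {E F : Type*} [NormedAddCommGroup E] [NormedSpace ℝ E]
    [NormedAddCommGroup F] [NormedSpace ℝ F] {Ψ Ψa : E → E} {H : E →L[ℝ] F} {K : F →L[ℝ] E}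
    {lam δ : ℝ}
    (hlip : ∀ x y, ‖(Ψ x - K (H (Ψ x))) - (Ψ y - K (H (Ψ y)))‖ ≤ lam * ‖x - y‖)
    (hmodelerr : ∀ v, ‖(Ψ v - Ψa v) - K (H (Ψ v - Ψa v))‖ ≤ δ) (m v : E) (η : F) :
    ‖(Ψa m - K (H (Ψa m))) + K (H (Ψ v) + η) - Ψ v‖ ≤ lam * ‖m - v‖ + δ + ‖K η‖ := by
  have hsplit : (Ψa m - K (H (Ψa m))) + K (H (Ψ v) + η) - Ψ v =
      ((Ψ m - K (H (Ψ m))) - (Ψ v - K (H (Ψ v))))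
        - ((Ψ m - Ψa m) - K (H (Ψ m - Ψa m))) + K η := by
    simp only [map_add, map_sub]
    abel
  rw [hsplit]
  calc _ ≤ ‖(Ψ m - K (H (Ψ m))) - (Ψ v - K (H (Ψ v)))‖
          + ‖(Ψ m - Ψa m) - K (H (Ψ m - Ψa m))‖ + ‖K η‖ :=
        (norm_add_le _ _).trans (by gcongr; exact norm_sub_le _ _)
    _ ≤ lam * ‖m - v‖ + δ + ‖K η‖ := by gcongr; exacts [hlip m v, hmodelerr m]

theorem integral_le_mul_integral_add_add_integral {Ω : Type*} [MeasurableSpace Ω]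
    {P : Measure Ω} [IsProbabilityMeasure P] {f g h : Ω → ℝ} {lam δ : ℝ}
    (hf : Integrable f P) (hg : Integrable g P) (hh : Integrable h P)
    (hle : ∀ ω, f ω ≤ lam * g ω + δ + h ω) :
    ∫ ω, f ω ∂P ≤ lam * ∫ ω, g ω ∂P + δ + ∫ ω, h ω ∂P := by
  have hint : Integrable (fun ω => lam * g ω + δ) P := (hg.const_mul lam).add (integrable_const δ)
  calc ∫ ω, f ω ∂P ≤ ∫ ω, (lam * g ω + δ + h ω) ∂P := integral_mono hf (hint.add hh) hle
    _ = lam * ∫ ω, g ω ∂P + δ + ∫ ω, h ω ∂P := by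
      rw [integral_add hint hh, integral_add (hg.const_mul lam) (integrable_const δ),
        integral_const_mul, integral_const, probReal_univ, one_smul]

theorem threeDVar_model_error_accuracy_general {dim k : ℕ}
    {Ω : Type*} [MeasurableSpace Ω] (P : Measure Ω) [IsProbabilityMeasure P]
    (Ψ Ψa : EuclideanSpace ℝ (Fin dim) → EuclideanSpace ℝ (Fin dim))
    (H : EuclideanSpace ℝ (Fin dim) →L[ℝ] EuclideanSpace ℝ (Fin k))
    (K : EuclideanSpace ℝ (Fin k) →L[ℝ] EuclideanSpace ℝ (Fin dim))
    (lam δ ε : ℝ)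
    (hΨ : Differentiable ℝ Ψ)
    (hlam1 : lam < 1)
    (hcontr : ∀ v : EuclideanSpace ℝ (Fin dim),
      ‖((ContinuousLinearMap.id ℝ (EuclideanSpace ℝ (Fin dim))) - K.comp H).comp
          (fderiv ℝ Ψ v)‖ ≤ lam)
    (hmodelerr : ∀ v : EuclideanSpace ℝ (Fin dim),
      ‖(Ψ v - Ψa v) - K (H (Ψ v - Ψa v))‖ ≤ δ)
    (vd : ℕ → EuclideanSpace ℝ (Fin dim))
    (hv : ∀ j, vd (j + 1) = Ψ (vd j))
    (η : ℕ → Ω → EuclideanSpace ℝ (Fin k))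
    (hηi : ∀ j, Integrable (fun ω => ‖K (η j ω)‖) P)
    (hε : ∀ j, (∫ ω, ‖K (η j ω)‖ ∂P) = ε)
    (m : ℕ → Ω → EuclideanSpace ℝ (Fin dim))
    (hm : ∀ j ω, m (j + 1) ω =
      (Ψa (m j ω) - K (H (Ψa (m j ω)))) + K (H (vd (j + 1)) + η (j + 1) ω))
    (hmi : ∀ j, Integrable (fun ω => ‖m j ω - vd j‖) P) :
    Filter.limsup (fun j => ∫ ω, ‖m j ω - vd j‖ ∂P) Filter.atTop ≤
      (ε + δ) / (1 - lam) := by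
  have hlam0 : 0 ≤ lam := (norm_nonneg _).trans (hcontr 0)
  have hlip (x y : EuclideanSpace ℝ (Fin dim)) :
      ‖(Ψ x - K (H (Ψ x))) - (Ψ y - K (H (Ψ y)))‖ ≤ lam * ‖x - y‖ := by
    simpa using (ContinuousLinearMap.id ℝ _ - K.comp H).norm_map_sub_map_le_of_norm_comp_fderiv_le
      hΨ hcontr x y
  refine limsup_le_div_one_sub_of_le_mul_add hlam0 hlam1
    (fun j => integral_nonneg fun ω => norm_nonneg _) fun j => ?_
  have hstep := integral_le_mul_integral_add_add_integral (hmi (j + 1)) (hmi j) (hηi (j + 1))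
    fun ω => by
      rw [hm, hv]
      exact norm_threeDVar_update_sub_le hlip hmodelerr (m j ω) (vd j) (η (j + 1) ω)
  rw [hε] at hstep
  linarith

/-- 3DVar long-time accuracy with model error: the truth evolves as
`v†_{j+1} = Ψ(v†_j)` with linear observations `y†_{j+1} = H v†_{j+1} + η†_{j+1}`,
and 3DVar with approximate model Ψᵃ and gain K updates
`m_{j+1} = (I−KH)Ψᵃ(m_j) + K y†_{j+1}`. If
`sup_v ‖(I−KH)DΨ(v)‖ ≤ λ < 1`, `sup_v ‖(I−KH)(Ψ(v)−Ψᵃ(v))‖ ≤ δ` and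
`ε = E‖Kη_j‖`, then `limsup_{j→∞} E‖m_j − v†_j‖ ≤ (ε + δ)/(1 − λ)`. -/
theorem threeDVar_model_error_accuracy {dim k : ℕ}
    {Ω : Type*} [MeasurableSpace Ω] (P : Measure Ω) [IsProbabilityMeasure P]
    (Ψ Ψa : EuclideanSpace ℝ (Fin dim) → EuclideanSpace ℝ (Fin dim))
    (H : EuclideanSpace ℝ (Fin dim) →L[ℝ] EuclideanSpace ℝ (Fin k))
    (K : EuclideanSpace ℝ (Fin k) →L[ℝ] EuclideanSpace ℝ (Fin dim))
    (lam δ ε : ℝ)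
    (hΨ : Differentiable ℝ Ψ)
    (hlam0 : 0 < lam) (hlam1 : lam < 1)
    (hcontr : ∀ v : EuclideanSpace ℝ (Fin dim),
      ‖((ContinuousLinearMap.id ℝ (EuclideanSpace ℝ (Fin dim))) - K.comp H).comp
          (fderiv ℝ Ψ v)‖ ≤ lam)
    (hmodelerr : ∀ v : EuclideanSpace ℝ (Fin dim),
      ‖(Ψ v - Ψa v) - K (H (Ψ v - Ψa v))‖ ≤ δ)
    (vd : ℕ → EuclideanSpace ℝ (Fin dim))
    (hv : ∀ j, vd (j + 1) = Ψ (vd j))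
    (η : ℕ → Ω → EuclideanSpace ℝ (Fin k))
    (hηi : ∀ j, Integrable (fun ω => ‖K (η j ω)‖) P)
    (hε : ∀ j, (∫ ω, ‖K (η j ω)‖ ∂P) = ε)
    (m : ℕ → Ω → EuclideanSpace ℝ (Fin dim))
    (hm : ∀ j ω, m (j + 1) ω =
      (Ψa (m j ω) - K (H (Ψa (m j ω)))) + K (H (vd (j + 1)) + η (j + 1) ω))
    (hmi : ∀ j, Integrable (fun ω => ‖m j ω - vd j‖) P) :
    Filter.limsup (fun j => ∫ ω, ‖m j ω - vd j‖ ∂P) Filter.atTop ≤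
      (ε + δ) / (1 - lam) :=
  threeDVar_model_error_accuracy_general P Ψ Ψa H K lam δ ε hΨ hlam1 hcontr hmodelerr vd hv η hηi hε
    m hm hmi
end
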